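/- Let T, T', and T̄ be standard Young tableaux of shape (n,n,n) with words w, w', w̄ and depth sequences d, d', d̄. Suppose T̄ → T' is a covering move swapping i and i+1 (so d̄_j ≤ d'_j for all j), and suppose d_j ≤ d̄_j for all j. If moreover w has an allowed swap at position i (w_i w_{i+1} ∈ {-+, -0, 0+}) producing tableau T'' with depth sequence d'', then d''_j ≤ d'_j for all j. -/

import Mathlib

/-- Symbols of the word of a three-row tableau / `sl₃` web boundary word. -/
inductive BSym
  | plus
  | zero
  | minus
deriving DecidableEq

/-- The symbol recording each row of a three-row tableau: row `0` (top) is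
`+`, row `1` (middle) is `0`, row `2` (bottom) is `-`. -/
def symOfRow (r : Fin 3) : BSym :=
  if r = 0 then BSym.plus else if r = 1 then BSym.zero else BSym.minus

/-- A standard Young tableau of rectangular shape with `k` rows and `n`
columns: a filling of the `k × n` grid with the numbers `1, ..., k*n`, each
occurring exactly once, increasing along rows (left to right) and down
columns. -/
structure SYTRect (k n : ℕ) where
  entry : Fin k → Fin n → ℕ
  mem_Icc : ∀ r c, entry r c ∈ Finset.Icc 1 (k * n)
  inj : ∀ r₁ c₁ r₂ c₂, entry r₁ c₁ = entry r₂ c₂ → r₁ = r₂ ∧ c₁ = c₂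
  row_lt : ∀ (r : Fin k) (c₁ c₂ : Fin n), c₁ < c₂ → entry r c₁ < entry r c₂
  col_lt : ∀ (r₁ r₂ : Fin k) (c : Fin n), r₁ < r₂ → entry r₁ c < entry r₂ c

/-- `w` is the boundary word of the three-row standard tableau `T`: for each
position `p` in `{1, ..., 3n}`, the symbol `w p` is `+`, `0` or `-`
according to whether `p` lies in row 1, 2 or 3 of `T`. -/
def IsWordOf {n : ℕ} (T : SYTRect 3 n) (w : ℕ → BSym) : Prop :=
  ∀ p ∈ Finset.Icc 1 (3 * n), ∀ r : Fin 3,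
    ((∃ c, T.entry r c = p) ↔ w p = symOfRow r)

/-- The step value of a symbol: `+ ↦ 1`, `0 ↦ 0`, `- ↦ -1`. -/
def symVal : BSym → ℤ
  | BSym.plus => 1
  | BSym.zero => 0
  | BSym.minus => -1

/-- The depth sequence of a word: `dseq w j` is the sum of the step values
of the first `j` letters (positions `1, ..., j`). -/
def dseq (w : ℕ → BSym) (j : ℕ) : ℤ :=
  ∑ p ∈ Finset.Icc 1 j, symVal (w p)

/-! The depth sequences of two words related by an adjacent swap at `i` agree everywhere except
at `i`. At `i` the inequality follows by comparing `d''_i = d_{i-1} + w_{i+1}` and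
`d'_i = d̄_{i-1} + w̄_{i+1}` using `d ≤ d̄` at `i - 1` and `i + 1`: a covering pair `ab` has
`a ∈ {0, -}` and `b ∈ {0, +}`, so the only bad case `b = +`, `b' = 0` forces `a' = -`, and then the
bound at `i + 1` has a full unit to spare. -/

def IsAdjacentSwap (N i : ℕ) (v w : ℕ → BSym) : Prop :=
  (∀ p ∈ Finset.Icc 1 N, p ≠ i → p ≠ i + 1 → v p = w p) ∧ v i = w (i + 1) ∧ v (i + 1) = w i

def IsCoveringPair (a b : BSym) : Prop :=
  (a, b) = (BSym.zero, BSym.plus) ∨ (a, b) = (BSym.minus, BSym.zero) ∨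
    (a, b) = (BSym.minus, BSym.plus)

lemma dseq_succ (w : ℕ → BSym) (m : ℕ) : dseq w (m + 1) = dseq w m + symVal (w (m + 1)) :=
  Finset.sum_Icc_succ_top (Nat.le_add_left 1 m) _

lemma add_symVal_le_of_isCoveringPair {a b a' b' : BSym} (hab : IsCoveringPair a b)
    (hab' : IsCoveringPair a' b') {x x' : ℤ} (hx : x ≤ x')
    (hx₂ : x + symVal a + symVal b ≤ x' + symVal a' + symVal b') :
    x + symVal b ≤ x' + symVal b' := by
  rcases hab with h | h | h <;> rcases hab' with h' | h' | h' <;>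
    obtain ⟨rfl, rfl⟩ := Prod.mk.inj h <;> obtain ⟨rfl, rfl⟩ := Prod.mk.inj h' <;>
    simp only [symVal] at hx₂ ⊢ <;> omega

namespace IsAdjacentSwap

variable {N k j : ℕ} {v w : ℕ → BSym}

lemma dseq_eq (h : IsAdjacentSwap N (k + 1) v w) (hj : j ≤ N) (hjk : j ≠ k + 1) :
    dseq v j = dseq w j := by
  obtain ⟨hoff, hfst, hsnd⟩ := h
  rcases Nat.lt_or_gt_of_ne hjk with hlt | hgt
  · refine Finset.sum_congr rfl fun p hp => ?_
    rw [Finset.mem_Icc] at hp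
    rw [hoff p (Finset.mem_Icc.2 ⟨hp.1, by omega⟩) (by omega) (by omega)]
  · set σ := Equiv.swap (k + 1) (k + 1 + 1)
    have hvσ : ∀ p ∈ Finset.Icc 1 j, v p = w (σ p) := by
      intro p hp
      rw [Finset.mem_Icc] at hp
      by_cases hp₁ : p = k + 1
      · rw [hp₁, Equiv.swap_apply_left, hfst]
      by_cases hp₂ : p = k + 1 + 1
      · rw [hp₂, Equiv.swap_apply_right, hsnd]
      rw [Equiv.swap_apply_of_ne_of_ne hp₁ hp₂,
        hoff p (Finset.mem_Icc.2 ⟨hp.1, by omega⟩) hp₁ hp₂]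
    have hσ : {p | σ p ≠ p} ⊆ Finset.Icc 1 j := by
      intro p hp
      rw [Set.mem_ofPred_eq, Equiv.swap_apply_ne_self_iff] at hp
      rw [Finset.mem_coe, Finset.mem_Icc]
      omega
    calc dseq v j = ∑ p ∈ Finset.Icc 1 j, symVal (w (σ p)) :=
          Finset.sum_congr rfl fun p hp => by rw [hvσ p hp]
      _ = dseq w j := σ.sum_comp _ (symVal ∘ w) hσ

lemma dseq_succ_eq (h : IsAdjacentSwap N (k + 1) v w) (hk : k ≤ N) :
    dseq v (k + 1) = dseq w k + symVal (w (k + 1 + 1)) := by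
  rw [dseq_succ, h.dseq_eq hk (by omega), h.2.1]

end IsAdjacentSwap

theorem dseq_diamond_general (n : ℕ) (i : ℕ)
    (hi : 1 ≤ i) (hi1 : i + 1 ≤ 3 * n)
    (w w' wb w'' : ℕ → BSym)
    (hcov_off : ∀ p ∈ Finset.Icc 1 (3 * n), p ≠ i → p ≠ i + 1 → w' p = wb p)
    (hcov_i : w' i = wb (i + 1)) (hcov_i1 : w' (i + 1) = wb i)
    (hcov_case : (wb i, wb (i + 1)) = (BSym.zero, BSym.plus) ∨
      (wb i, wb (i + 1)) = (BSym.minus, BSym.zero) ∨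
      (wb i, wb (i + 1)) = (BSym.minus, BSym.plus))
    (hle : ∀ j ≤ 3 * n, dseq w j ≤ dseq wb j)
    (hcase : (w i, w (i + 1)) = (BSym.zero, BSym.plus) ∨
      (w i, w (i + 1)) = (BSym.minus, BSym.zero) ∨
      (w i, w (i + 1)) = (BSym.minus, BSym.plus))
    (hswap_off : ∀ p ∈ Finset.Icc 1 (3 * n), p ≠ i → p ≠ i + 1 → w'' p = w p)
    (hswap_i : w'' i = w (i + 1)) (hswap_i1 : w'' (i + 1) = w i) :
    ∀ j ≤ 3 * n, dseq w'' j ≤ dseq w' j := by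
  obtain ⟨k, rfl⟩ : ∃ k, i = k + 1 := ⟨i - 1, by omega⟩
  have hswap : IsAdjacentSwap (3 * n) (k + 1) w'' w := ⟨hswap_off, hswap_i, hswap_i1⟩
  have hcov : IsAdjacentSwap (3 * n) (k + 1) w' wb := ⟨hcov_off, hcov_i, hcov_i1⟩
  intro j hj
  rcases eq_or_ne j (k + 1) with rfl | hjk
  · have hnext := hle (k + 1 + 1) hi1
    rw [dseq_succ w, dseq_succ w, dseq_succ wb, dseq_succ wb] at hnext
    rw [hswap.dseq_succ_eq (by omega), hcov.dseq_succ_eq (by omega)]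
    exact add_symVal_le_of_isCoveringPair hcase hcov_case (hle k (by omega)) hnext
  · rw [hswap.dseq_eq hj hjk, hcov.dseq_eq hj hjk]
    exact hle j hj

/-- Diamond lemma for depth sequences.  Suppose `T̄ → T'` is a covering move
swapping positions `i`, `i+1` (so the depth sequence of `T̄` is pointwise at
most that of `T'`), and suppose the depth sequence of `T` is pointwise at
most that of `T̄`.  If moreover the word `w` of `T` has an allowed swap at
position `i` (symbols `-+`, `-0` or `0+`) producing a standard tableau `T''`,
then the depth sequence of `T''` is pointwise at most that of `T'`. -/
theorem dseq_diamond (n : ℕ) (T T' Tb T'' : SYTRect 3 n) (i : ℕ)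
    (hi : 1 ≤ i) (hi1 : i + 1 ≤ 3 * n)
    (w w' wb w'' : ℕ → BSym)
    (hw : IsWordOf T w) (hw' : IsWordOf T' w')
    (hwb : IsWordOf Tb wb) (hw'' : IsWordOf T'' w'')
    (hcov_off : ∀ p ∈ Finset.Icc 1 (3 * n), p ≠ i → p ≠ i + 1 → w' p = wb p)
    (hcov_i : w' i = wb (i + 1)) (hcov_i1 : w' (i + 1) = wb i)
    (hcov_case : (wb i, wb (i + 1)) = (BSym.zero, BSym.plus) ∨
      (wb i, wb (i + 1)) = (BSym.minus, BSym.zero) ∨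
      (wb i, wb (i + 1)) = (BSym.minus, BSym.plus))
    (hle : ∀ j ≤ 3 * n, dseq w j ≤ dseq wb j)
    (hcase : (w i, w (i + 1)) = (BSym.zero, BSym.plus) ∨
      (w i, w (i + 1)) = (BSym.minus, BSym.zero) ∨
      (w i, w (i + 1)) = (BSym.minus, BSym.plus))
    (hswap_off : ∀ p ∈ Finset.Icc 1 (3 * n), p ≠ i → p ≠ i + 1 → w'' p = w p)
    (hswap_i : w'' i = w (i + 1)) (hswap_i1 : w'' (i + 1) = w i) :
    ∀ j ≤ 3 * n, dseq w'' j ≤ dseq w' j :=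
  dseq_diamond_general n i hi hi1 w w' wb w'' hcov_off hcov_i hcov_i1 hcov_case hle hcase hswap_off
    hswap_i hswap_i1
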